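/- Let W ∈ B(Y,X) be nonzero and let A ∈ B(X,Y) be Wg-Drazin invertible. Then WP_{R((AW)^d)} ∈ B(Y,X) is Moore-Penrose invertible, WA(WA)^ⓓWA ∈ B(X) is group invertible, and A^{⊗,W} = (WP_{R((AW)^d)})^† (WA(WA)^ⓓWA)^# = (WP_{R((AW)^d)})^† (P_{R((WA)^d)}WA)^#, where P_{R((AW)^d)} and P_{R((WA)^d)} are the orthogonal projections onto R((AW)^d) and R((WA)^d) respectively, and (WA)^ⓓ is the core-EP inverse of WA. -/

import Mathlib

open ContinuousLinearMap

variable {X Y : Type*}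
  [NormedAddCommGroup X] [InnerProductSpace ℂ X] [CompleteSpace X]
  [NormedAddCommGroup Y] [InnerProductSpace ℂ Y] [CompleteSpace Y]

/-- An operator is quasinilpotent if its spectrum equals `{0}`. -/
def IsQuasinilpotent (T : X →L[ℂ] X) : Prop := spectrum ℂ T = {0}

/-- `B` is the generalized Drazin inverse of `A`. -/
def IsGDrazinInv (A B : X →L[ℂ] X) : Prop :=
  A * B = B * A ∧ B * A * B = B ∧ IsQuasinilpotent (A - A * A * B)

/-- `B` is the Wg-Drazin inverse of `A` (relative to the weight `W`); quasinilpotence of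
`A - AWBWA ∈ B(X,Y)` is taken relative to `W`, i.e. `W(A - AWBWA)` is quasinilpotent. -/
def IsWgDrazinInv (W : Y →L[ℂ] X) (A B : X →L[ℂ] Y) : Prop :=
  A ∘L W ∘L B = B ∘L W ∘L A ∧
  B ∘L W ∘L A ∘L W ∘L B = B ∧
  IsQuasinilpotent (W ∘L (A - A ∘L W ∘L B ∘L W ∘L A))

/-- `P` is the orthogonal projection of the space onto the subspace `S`. -/
def IsOrthoProjOnto (P : X →L[ℂ] X) (S : Submodule ℂ X) : Prop :=
  P * P = P ∧ ContinuousLinearMap.adjoint P = P ∧ LinearMap.range P.toLinearMap = S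

/-- `P` is the idempotent with range `L` and kernel `M` (i.e. `P = P_{L,M}`). -/
def IsIdempotentOnAlong (P : X →L[ℂ] X) (L M : Submodule ℂ X) : Prop :=
  P * P = P ∧ LinearMap.range P.toLinearMap = L ∧ LinearMap.ker P.toLinearMap = M

/-- Given the generalized Drazin inverse `Ad` of `A`, `B` is the core-EP inverse of `A`:
`AB` is the orthogonal projection onto `R(A^d)` and `R(B) ⊆ R(A^d)`. -/
def IsCoreEPInv (A Ad B : X →L[ℂ] X) : Prop :=
  IsOrthoProjOnto (A * B) (LinearMap.range Ad.toLinearMap) ∧ LinearMap.range B.toLinearMap ≤ LinearMap.range Ad.toLinearMap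

/-- Given the generalized Drazin inverses `WAd` of `WA` and `AWd` of `AW`, `B` is the
weighted core-EP inverse of `A`: `WAWB` is the orthogonal projection onto `R((WA)^d)`
and `R(B) ⊆ R((AW)^d)`. -/
def IsWCoreEPInv (W : Y →L[ℂ] X) (A : X →L[ℂ] Y) (WAd : X →L[ℂ] X) (AWd : Y →L[ℂ] Y)
    (B : X →L[ℂ] Y) : Prop :=
  IsOrthoProjOnto (W ∘L A ∘L W ∘L B) (LinearMap.range WAd.toLinearMap) ∧
  LinearMap.range B.toLinearMap ≤ LinearMap.range AWd.toLinearMap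

/-- `B` is the group inverse of `A`. -/
def IsGroupInv (A B : X →L[ℂ] X) : Prop :=
  A * B = B * A ∧ B * A * B = B ∧ A * B * A = A

/-- `S` is the Moore-Penrose inverse of `T`. -/
def IsMPInv (T : Y →L[ℂ] X) (S : X →L[ℂ] Y) : Prop :=
  T ∘L S ∘L T = T ∧ S ∘L T ∘L S = S ∧
  ContinuousLinearMap.adjoint (T ∘L S) = T ∘L S ∧
  ContinuousLinearMap.adjoint (S ∘L T) = S ∘L T

/-- `C` is the core inverse of `T`: `TC` is the orthogonal projection onto `R(T)`
and `R(C) ⊆ R(T)`. -/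
def IsCoreInv (T C : X →L[ℂ] X) : Prop :=
  IsOrthoProjOnto (T * C) (LinearMap.range T.toLinearMap) ∧ LinearMap.range C.toLinearMap ≤ LinearMap.range T.toLinearMap



section AuxiliaryLemmas

private lemma qn_decay {R : Type*} [NormedRing R] [NormedAlgebra ℂ R] [CompleteSpace R]
    {N x : R} {c : ℝ} (hc : 0 ≤ c) (hN : spectrum ℂ N = {0})
    (hx : ∀ n : ℕ, ‖x‖ ≤ c ^ (n + 1) * ‖N ^ (n + 1)‖) : x = 0 := by
  have hrad : spectralRadius ℂ N = 0 := by simp [spectralRadius, hN]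
  have hg := spectrum.pow_nnnorm_pow_one_div_tendsto_nhds_spectralRadius N
  rw [hrad] at hg
  set r : ℝ := (2 * (c + 1))⁻¹ with hr
  have hrpos : 0 < r := by positivity
  have hev : ∀ᶠ n : ℕ in Filter.atTop,
      (‖N ^ n‖₊ : ENNReal) ^ (1 / (n : ℝ)) < ENNReal.ofReal r :=
    hg.eventually_lt_const (ENNReal.ofReal_pos.mpr hrpos)
  have hev' : ∀ᶠ n : ℕ in Filter.atTop,
      (‖N ^ (n + 1)‖₊ : ENNReal) ^ (1 / ((n + 1 : ℕ) : ℝ)) < ENNReal.ofReal r :=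
    (Filter.tendsto_add_atTop_nat 1).eventually hev
  have hcr : c * r ≤ 1 / 2 := by
    have h2c : (0 : ℝ) < 2 * (c + 1) := by positivity
    rw [hr, ← div_eq_mul_inv, div_le_iff₀ h2c]
    nlinarith
  have hbound : ∀ᶠ n : ℕ in Filter.atTop, ‖x‖ ≤ (1 / 2 : ℝ) ^ (n + 1) := by
    filter_upwards [hev'] with n hn
    have hne : ((n + 1 : ℕ) : ℝ) ≠ 0 := by positivity
    have h1 : ((‖N ^ (n + 1)‖₊ : ENNReal) ^ (1 / ((n + 1 : ℕ) : ℝ))) ^ ((n + 1 : ℕ) : ℝ)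
        ≤ (ENNReal.ofReal r) ^ ((n + 1 : ℕ) : ℝ) :=
      ENNReal.rpow_le_rpow hn.le (by positivity)
    rw [← ENNReal.rpow_mul, one_div, inv_mul_cancel₀ hne, ENNReal.rpow_one,
      ENNReal.rpow_natCast, ← ENNReal.ofReal_pow hrpos.le] at h1
    have h2 : ‖N ^ (n + 1)‖ ≤ r ^ (n + 1) := by
      have h3 := ENNReal.toReal_mono ENNReal.ofReal_ne_top h1
      simpa [ENNReal.toReal_ofReal (by positivity : (0:ℝ) ≤ r ^ (n + 1))] using h3
    calc ‖x‖ ≤ c ^ (n + 1) * ‖N ^ (n + 1)‖ := hx n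
      _ ≤ c ^ (n + 1) * r ^ (n + 1) := mul_le_mul_of_nonneg_left h2 (by positivity)
      _ = (c * r) ^ (n + 1) := (mul_pow _ _ _).symm
      _ ≤ (1 / 2 : ℝ) ^ (n + 1) := pow_le_pow_left₀ (by positivity) hcr _
  have hlim : Filter.Tendsto (fun n : ℕ => (1 / 2 : ℝ) ^ (n + 1)) Filter.atTop (nhds 0) := by
    have h0 : Filter.Tendsto (fun n : ℕ => (1 / 2 : ℝ) ^ n) Filter.atTop (nhds 0) := by
      apply tendsto_pow_atTop_nhds_zero_of_lt_one <;> norm_num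
    exact h0.comp (Filter.tendsto_add_atTop_nat 1)
  have hle : ‖x‖ ≤ 0 := ge_of_tendsto hlim hbound
  simpa using le_antisymm hle (norm_nonneg x)

private lemma isUnit_sub_swap {X Y : Type*} [NormedAddCommGroup X] [NormedSpace ℂ X]
    [NormedAddCommGroup Y] [NormedSpace ℂ Y]
    (K : X →L[ℂ] Y) (W : Y →L[ℂ] X) {lam : ℂ} (hlam : lam ≠ 0)
    (h : IsUnit (algebraMap ℂ (X →L[ℂ] X) lam - W ∘L K)) :
    IsUnit (algebraMap ℂ (Y →L[ℂ] Y) lam - K ∘L W) := by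
  obtain ⟨u, hu⟩ := h
  have hmu : (algebraMap ℂ (X →L[ℂ] X) lam - W ∘L K) * (↑u⁻¹ : X →L[ℂ] X) = 1 := by
    rw [← hu]; exact u.mul_inv
  have hum : (↑u⁻¹ : X →L[ℂ] X) * (algebraMap ℂ (X →L[ℂ] X) lam - W ∘L K) = 1 := by
    rw [← hu]; exact u.inv_mul
  have h1 : ∀ x : X, lam • (↑u⁻¹ : X →L[ℂ] X) x - W (K ((↑u⁻¹ : X →L[ℂ] X) x)) = x := by
    intro x
    have := DFunLike.congr_fun hmu x
    simpa [Algebra.algebraMap_eq_smul_one, ContinuousLinearMap.mul_apply,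
      ContinuousLinearMap.sub_apply, ContinuousLinearMap.smul_apply] using this
  have h2 : ∀ x : X, (↑u⁻¹ : X →L[ℂ] X) (lam • x - W (K x)) = x := by
    intro x
    have := DFunLike.congr_fun hum x
    simpa [Algebra.algebraMap_eq_smul_one, ContinuousLinearMap.mul_apply,
      ContinuousLinearMap.sub_apply, ContinuousLinearMap.smul_apply] using this
  set V : Y →L[ℂ] Y := lam⁻¹ • ((1 : Y →L[ℂ] Y) + K ∘L ((↑u⁻¹ : X →L[ℂ] X) ∘L W)) with hV
  have hVapp : ∀ y : Y, V y = lam⁻¹ • (y + K ((↑u⁻¹ : X →L[ℂ] X) (W y))) := by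
    intro y; simp [hV]
  have hWV : ∀ y : Y, W (V y) = (↑u⁻¹ : X →L[ℂ] X) (W y) := by
    intro y
    have h' := sub_eq_iff_eq_add.mp (h1 (W y))
    have hexp : W (K ((↑u⁻¹ : X →L[ℂ] X) (W y))) =
        lam • (↑u⁻¹ : X →L[ℂ] X) (W y) - W y := by
      rw [h']; abel
    rw [hVapp y, map_smul, map_add, hexp]
    have hab : W y + (lam • (↑u⁻¹ : X →L[ℂ] X) (W y) - W y) =
        lam • (↑u⁻¹ : X →L[ℂ] X) (W y) := by abel
    rw [hab, smul_smul, inv_mul_cancel₀ hlam, one_smul]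
  refine ⟨⟨algebraMap ℂ (Y →L[ℂ] Y) lam - K ∘L W, V, ?_, ?_⟩, rfl⟩
  · ext y
    simp only [ContinuousLinearMap.mul_apply, ContinuousLinearMap.sub_apply,
      ContinuousLinearMap.one_apply, Algebra.algebraMap_eq_smul_one,
      ContinuousLinearMap.smul_apply, ContinuousLinearMap.comp_apply]
    rw [hWV y, hVapp y, smul_smul, mul_inv_cancel₀ hlam, one_smul]
    abel
  · ext y
    simp only [ContinuousLinearMap.mul_apply, ContinuousLinearMap.sub_apply,
      ContinuousLinearMap.one_apply, Algebra.algebraMap_eq_smul_one,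
      ContinuousLinearMap.smul_apply, ContinuousLinearMap.comp_apply]
    rw [hVapp, map_sub, map_smul, h2 (W y)]
    have hab2 : lam • y - K (W y) + K (W y) = lam • y := by abel
    rw [hab2, smul_smul, inv_mul_cancel₀ hlam, one_smul]

private lemma pow_mul_pow_left {M : Type*} [Monoid M] {t b : M} (hc : t * b = b * t)
    (hi : b * t * b = b) (n : ℕ) : b ^ (n + 1) * t ^ (n + 1) = b * t := by
  have hcbt : Commute b t := hc.symm
  have hid : IsIdempotentElem (b * t) := by
    show (b * t) * (b * t) = b * t
    rw [← mul_assoc, hi]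
  rw [← hcbt.mul_pow, hid.pow_succ_eq]

private lemma pow_mul_pow_right {M : Type*} [Monoid M] {t b : M} (hc : t * b = b * t)
    (hi : b * t * b = b) (n : ℕ) : t ^ (n + 1) * b ^ (n + 1) = t * b := by
  have hctb : Commute t b := hc
  have hid : IsIdempotentElem (t * b) := by
    show (t * b) * (t * b) = t * b
    rw [mul_assoc, ← mul_assoc b t b, hi]
  rw [← hctb.mul_pow, hid.pow_succ_eq]

private lemma pow_mul_idem {M : Type*} [Monoid M] {t e : M} (hc : t * e = e * t)
    (he : e * e = e) (n : ℕ) : (t * e) ^ (n + 1) = t ^ (n + 1) * e := by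
  have hcte : Commute t e := hc
  have he' : IsIdempotentElem e := he
  rw [hcte.mul_pow, he'.pow_succ_eq]

private lemma qn_swap {X Y : Type*}
    [NormedAddCommGroup X] [InnerProductSpace ℂ X] [CompleteSpace X]
    [NormedAddCommGroup Y] [InnerProductSpace ℂ Y] [CompleteSpace Y]
    [Nontrivial Y]
    (K : X →L[ℂ] Y) (W : Y →L[ℂ] X) (h : IsQuasinilpotent (W ∘L K)) :
    IsQuasinilpotent (K ∘L W) := by
  haveI : Nontrivial (Y →L[ℂ] Y) := by
    obtain ⟨y, hy⟩ := exists_ne (0 : Y)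
    exact ⟨1, 0, fun hh => hy (by simpa using DFunLike.congr_fun hh y)⟩
  have hne : (spectrum ℂ (K ∘L W)).Nonempty := spectrum.nonempty _
  have hsub : spectrum ℂ (K ∘L W) ⊆ {0} := by
    intro lam hlam
    simp only [Set.mem_singleton_iff]
    by_contra hlam0
    have hn : lam ∉ spectrum ℂ (W ∘L K) := by
      rw [show spectrum ℂ (W ∘L K) = {0} from h]
      simpa using hlam0
    exact (spectrum.notMem_iff.mpr
      (isUnit_sub_swap K W hlam0 (spectrum.notMem_iff.mp hn))) hlam
  exact (Set.Nonempty.subset_singleton_iff hne).mp hsub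

private lemma gdrazin_unique {X : Type*}
    [NormedAddCommGroup X] [InnerProductSpace ℂ X] [CompleteSpace X]
    {T B₁ B₂ : X →L[ℂ] X}
    (h₁ : IsGDrazinInv T B₁) (h₂ : IsGDrazinInv T B₂) : B₁ = B₂ := by
  obtain ⟨hc₁, hi₁, hq₁⟩ := h₁
  obtain ⟨hc₂, hi₂, hq₂⟩ := h₂
  have hN₂ : T - T * T * B₂ = T * (1 - T * B₂) := by
    rw [mul_sub, mul_one, ← mul_assoc]
  have hN₁ : T - T * T * B₁ = T * (1 - T * B₁) := by
    rw [mul_sub, mul_one, ← mul_assoc]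
  have hcQ : T * (1 - T * B₂) = (1 - T * B₂) * T := by
    rw [mul_sub, sub_mul, mul_one, one_mul]
    congr 1
    rw [hc₂, ← mul_assoc, hc₂]
  have hcP : T * (1 - T * B₁) = (1 - T * B₁) * T := by
    rw [mul_sub, sub_mul, mul_one, one_mul]
    congr 1
    rw [hc₁, ← mul_assoc, hc₁]
  have hQidem : (1 - T * B₂) * (1 - T * B₂) = 1 - T * B₂ := by
    have hq : (T * B₂) * (T * B₂) = T * B₂ := by
      rw [mul_assoc, ← mul_assoc B₂ T B₂, show B₂ * T * B₂ = B₂ from hi₂]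
    rw [sub_mul, one_mul, mul_sub, mul_one, hq]
    abel
  have hPidem : (1 - T * B₁) * (1 - T * B₁) = 1 - T * B₁ := by
    have hq : (T * B₁) * (T * B₁) = T * B₁ := by
      rw [mul_assoc, ← mul_assoc B₁ T B₁, show B₁ * T * B₁ = B₁ from hi₁]
    rw [sub_mul, one_mul, mul_sub, mul_one, hq]
    abel
  have key1 : ∀ n : ℕ, (T * B₁) * (1 - T * B₂)
      = B₁ ^ (n + 1) * (T - T * T * B₂) ^ (n + 1) := by
    intro n
    rw [hN₂, pow_mul_idem hcQ hQidem n, ← mul_assoc,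
      pow_mul_pow_left (hc := hc₁) (hi := hi₁) n, hc₁]
  have key2 : ∀ n : ℕ, (1 - T * B₁) * (T * B₂)
      = (T - T * T * B₁) ^ (n + 1) * B₂ ^ (n + 1) := by
    intro n
    have hcomm : Commute T (1 - T * B₁) := hcP
    rw [hN₁, pow_mul_idem hcP hPidem n, (hcomm.pow_left (n + 1)).eq, mul_assoc,
      pow_mul_pow_right (hc := hc₂) (hi := hi₂) n]
  have hz1 : (T * B₁) * (1 - T * B₂) = 0 := by
    refine qn_decay (norm_nonneg B₁) hq₂ (fun n => ?_)
    rw [key1 n]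
    calc ‖B₁ ^ (n+1) * (T - T * T * B₂) ^ (n+1)‖
        ≤ ‖B₁ ^ (n+1)‖ * ‖(T - T * T * B₂) ^ (n+1)‖ := norm_mul_le _ _
      _ ≤ ‖B₁‖ ^ (n+1) * ‖(T - T * T * B₂) ^ (n+1)‖ :=
          mul_le_mul_of_nonneg_right (norm_pow_le' _ n.succ_pos) (norm_nonneg _)
  have hz2 : (1 - T * B₁) * (T * B₂) = 0 := by
    refine qn_decay (norm_nonneg B₂) hq₁ (fun n => ?_)
    rw [key2 n]
    calc ‖(T - T * T * B₁) ^ (n+1) * B₂ ^ (n+1)‖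
        ≤ ‖(T - T * T * B₁) ^ (n+1)‖ * ‖B₂ ^ (n+1)‖ := norm_mul_le _ _
      _ ≤ ‖(T - T * T * B₁) ^ (n+1)‖ * ‖B₂‖ ^ (n+1) :=
          mul_le_mul_of_nonneg_left (norm_pow_le' _ n.succ_pos) (norm_nonneg _)
      _ = ‖B₂‖ ^ (n+1) * ‖(T - T * T * B₁) ^ (n+1)‖ := mul_comm _ _
  have hPQ : T * B₁ = (T * B₁) * (T * B₂) := by
    have h := hz1
    rw [mul_sub, mul_one, sub_eq_zero] at h
    exact h
  have hQP : T * B₂ = (T * B₁) * (T * B₂) := by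
    have h := hz2
    rw [sub_mul, one_mul, sub_eq_zero] at h
    exact h
  have hPQeq : T * B₁ = T * B₂ := by
    rw [hPQ, ← hQP]
  calc B₁ = B₁ * T * B₁ := hi₁.symm
    _ = B₁ * (T * B₁) := mul_assoc _ _ _
    _ = B₁ * (T * B₂) := by rw [hPQeq]
    _ = (B₁ * T) * B₂ := (mul_assoc _ _ _).symm
    _ = (T * B₁) * B₂ := by rw [hc₁]
    _ = (T * B₂) * B₂ := by rw [hPQeq]
    _ = (B₂ * T) * B₂ := by rw [hc₂]
    _ = B₂ := hi₂

end AuxiliaryLemmas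

section AuxiliaryLemmas2

variable {X Y : Type*}
  [NormedAddCommGroup X] [InnerProductSpace ℂ X] [CompleteSpace X]
  [NormedAddCommGroup Y] [InnerProductSpace ℂ Y] [CompleteSpace Y]

private lemma proj_fix {P : X →L[ℂ] X} {S : Submodule ℂ X} (hP : IsOrthoProjOnto P S) :
    ∀ x ∈ S, P x = x := by
  intro x hx
  rw [← hP.2.2] at hx
  obtain ⟨y, rfl⟩ := hx
  simpa using DFunLike.congr_fun hP.1 y

private lemma proj_unique {P₁ P₂ : X →L[ℂ] X} {S : Submodule ℂ X}
    (h₁ : IsOrthoProjOnto P₁ S) (h₂ : IsOrthoProjOnto P₂ S) : P₁ = P₂ := by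
  have e1 : P₂ ∘L P₁ = P₁ := by
    ext x
    simp only [ContinuousLinearMap.comp_apply]
    exact proj_fix h₂ _ (by rw [← h₁.2.2]; exact LinearMap.mem_range_self _ x)
  have e2 : P₁ ∘L P₂ = P₂ := by
    ext x
    simp only [ContinuousLinearMap.comp_apply]
    exact proj_fix h₁ _ (by rw [← h₂.2.2]; exact LinearMap.mem_range_self _ x)
  calc P₁ = ContinuousLinearMap.adjoint P₁ := h₁.2.1.symm
    _ = ContinuousLinearMap.adjoint (P₂ ∘L P₁) := by rw [e1]
    _ = ContinuousLinearMap.adjoint P₁ ∘L ContinuousLinearMap.adjoint P₂ :=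
        ContinuousLinearMap.adjoint_comp _ _
    _ = P₁ ∘L P₂ := by rw [h₁.2.1, h₂.2.1]
    _ = P₂ := e2

private lemma mp_unique {T : Y →L[ℂ] X} {S₁ S₂ : X →L[ℂ] Y}
    (h₁ : IsMPInv T S₁) (h₂ : IsMPInv T S₂) : S₁ = S₂ := by
  obtain ⟨ht₁, hs₁, ha₁, hb₁⟩ := h₁
  obtain ⟨ht₂, hs₂, ha₂, hb₂⟩ := h₂
  have pt1 : ∀ y : Y, T (S₁ (T y)) = T y := fun y => by
    simpa using DFunLike.congr_fun ht₁ y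
  have pt2 : ∀ y : Y, T (S₂ (T y)) = T y := fun y => by
    simpa using DFunLike.congr_fun ht₂ y
  have e1 : T ∘L S₁ = T ∘L S₂ := by
    have h : T ∘L S₁ = (T ∘L S₂) ∘L (T ∘L S₁) := by
      ext x
      simp only [ContinuousLinearMap.comp_apply]
      exact (pt2 (S₁ x)).symm
    have h' : (T ∘L S₁) ∘L (T ∘L S₂) = T ∘L S₂ := by
      ext x
      simp only [ContinuousLinearMap.comp_apply]
      exact pt1 (S₂ x)
    calc T ∘L S₁ = ContinuousLinearMap.adjoint (T ∘L S₁) := ha₁.symm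
      _ = ContinuousLinearMap.adjoint ((T ∘L S₂) ∘L (T ∘L S₁)) := by rw [← h]
      _ = ContinuousLinearMap.adjoint (T ∘L S₁) ∘L ContinuousLinearMap.adjoint (T ∘L S₂) :=
          ContinuousLinearMap.adjoint_comp _ _
      _ = (T ∘L S₁) ∘L (T ∘L S₂) := by rw [ha₁, ha₂]
      _ = T ∘L S₂ := h'
  have e2 : S₁ ∘L T = S₂ ∘L T := by
    have h : S₁ ∘L T = (S₁ ∘L T) ∘L (S₂ ∘L T) := by
      ext y
      simp only [ContinuousLinearMap.comp_apply]
      exact congrArg S₁ (pt2 y).symm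
    have h' : (S₂ ∘L T) ∘L (S₁ ∘L T) = S₂ ∘L T := by
      ext y
      simp only [ContinuousLinearMap.comp_apply]
      exact congrArg S₂ (pt1 y)
    calc S₁ ∘L T = ContinuousLinearMap.adjoint (S₁ ∘L T) := hb₁.symm
      _ = ContinuousLinearMap.adjoint ((S₁ ∘L T) ∘L (S₂ ∘L T)) := by rw [← h]
      _ = ContinuousLinearMap.adjoint (S₂ ∘L T) ∘L ContinuousLinearMap.adjoint (S₁ ∘L T) :=
          ContinuousLinearMap.adjoint_comp _ _
      _ = (S₂ ∘L T) ∘L (S₁ ∘L T) := by rw [hb₁, hb₂]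
      _ = S₂ ∘L T := h'
  ext x
  have q1 : T (S₁ x) = T (S₂ x) := by simpa using DFunLike.congr_fun e1 x
  have q2 : S₁ (T (S₂ x)) = S₂ (T (S₂ x)) := by simpa using DFunLike.congr_fun e2 (S₂ x)
  have q3 : S₁ (T (S₁ x)) = S₁ x := by simpa using DFunLike.congr_fun hs₁ x
  have q4 : S₂ (T (S₂ x)) = S₂ x := by simpa using DFunLike.congr_fun hs₂ x
  rw [← q3, q1, q2, q4]

private lemma group_unique {M G₁ G₂ : X →L[ℂ] X}
    (h₁ : IsGroupInv M G₁) (h₂ : IsGroupInv M G₂) : G₁ = G₂ := by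
  obtain ⟨c₁, i₁, o₁⟩ := h₁
  obtain ⟨c₂, i₂, o₂⟩ := h₂
  have sa : G₁ = G₁ * G₁ * M := by
    calc G₁ = G₁ * M * G₁ := i₁.symm
      _ = G₁ * (M * G₁) := mul_assoc _ _ _
      _ = G₁ * (G₁ * M) := by rw [c₁]
      _ = G₁ * G₁ * M := (mul_assoc _ _ _).symm
  have sb : G₂ = M * G₂ * G₂ := by
    calc G₂ = G₂ * M * G₂ := i₂.symm
      _ = (M * G₂) * G₂ := by rw [← c₂]
  have s2 : G₁ = G₁ * G₂ * M := by
    calc G₁ = G₁ * G₁ * M := sa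
      _ = G₁ * G₁ * (M * G₂ * M) := by rw [o₂]
      _ = (G₁ * G₁ * M) * G₂ * M := by simp only [mul_assoc]
      _ = G₁ * G₂ * M := by rw [← sa]
  have s4 : G₂ = M * G₁ * G₂ := by
    calc G₂ = M * G₂ * G₂ := sb
      _ = (M * G₁ * M) * G₂ * G₂ := by rw [o₁]
      _ = M * G₁ * (M * G₂ * G₂) := by simp only [mul_assoc]
      _ = M * G₁ * G₂ := by rw [← sb]
  calc G₁ = G₁ * G₂ * M := s2
    _ = G₁ * (G₂ * M) := mul_assoc _ _ _
    _ = G₁ * (M * G₂) := by rw [c₂]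
    _ = (G₁ * M) * G₂ := (mul_assoc _ _ _).symm
    _ = (M * G₁) * G₂ := by rw [← c₁]
    _ = G₂ := s4.symm

end AuxiliaryLemmas2

theorem stmt10
    (W : Y →L[ℂ] X) (hW : W ≠ 0)
    (A Adw : X →L[ℂ] Y) (hAdw : IsWgDrazinInv W A Adw)
    (WAd : X →L[ℂ] X) (hWAd : IsGDrazinInv (W ∘L A) WAd)
    (AWd : Y →L[ℂ] Y) (hAWd : IsGDrazinInv (A ∘L W) AWd)
    (Ace : X →L[ℂ] Y) (hAce : IsWCoreEPInv W A WAd AWd Ace)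
    (Aot : X →L[ℂ] Y) (hAot : Aot = Ace ∘L W ∘L Ace ∘L W ∘L A)
    (PAW : Y →L[ℂ] Y) (hPAW : IsOrthoProjOnto PAW (LinearMap.range AWd.toLinearMap))
    (PWA : X →L[ℂ] X) (hPWA : IsOrthoProjOnto PWA (LinearMap.range WAd.toLinearMap))
    (WAce : X →L[ℂ] X) (hWAce : IsCoreEPInv (W ∘L A) WAd WAce) :
    (∃ S : X →L[ℂ] Y, IsMPInv (W ∘L PAW) S) ∧
    (∃ G : X →L[ℂ] X, IsGroupInv ((W ∘L A) * WAce * (W ∘L A)) G) ∧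
    (∃ G' : X →L[ℂ] X, IsGroupInv (PWA * (W ∘L A)) G') ∧
    (∀ (S : X →L[ℂ] Y) (G G' : X →L[ℂ] X),
      IsMPInv (W ∘L PAW) S →
      IsGroupInv ((W ∘L A) * WAce * (W ∘L A)) G →
      IsGroupInv (PWA * (W ∘L A)) G' →
      Aot = S ∘L G ∧ Aot = S ∘L G') := by
  -- nontriviality
  obtain ⟨y₀, hy₀⟩ : ∃ y, W y ≠ 0 := by
    by_contra hcon
    push_neg at hcon
    exact hW (by ext y; simpa using hcon y)
  haveI : Nontrivial X := ⟨⟨W y₀, 0, hy₀⟩⟩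
  haveI : Nontrivial Y := ⟨⟨y₀, 0, fun h => hy₀ (by rw [h, map_zero])⟩⟩
  obtain ⟨hw1, hw2, hw3⟩ := hAdw
  have hw1x : ∀ x, A (W (Adw x)) = Adw (W (A x)) := fun x => by
    simpa using DFunLike.congr_fun hw1 x
  have hw2x : ∀ x, Adw (W (A (W (Adw x)))) = Adw x := fun x => by
    simpa using DFunLike.congr_fun hw2 x
  -- W ∘L Adw is a gDrazin inverse of W ∘L A
  have hB : IsGDrazinInv (W ∘L A) (W ∘L Adw) := by
    refine ⟨?_, ?_, ?_⟩
    · ext x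
      simp only [ContinuousLinearMap.mul_apply, ContinuousLinearMap.comp_apply]
      exact congrArg W (hw1x x)
    · ext x
      simp only [ContinuousLinearMap.mul_apply, ContinuousLinearMap.comp_apply]
      exact congrArg W (hw2x x)
    · have heq : (W ∘L A) - (W ∘L A) * (W ∘L A) * (W ∘L Adw)
          = W ∘L (A - A ∘L W ∘L Adw ∘L W ∘L A) := by
        ext x
        simp only [ContinuousLinearMap.sub_apply, ContinuousLinearMap.mul_apply,
          ContinuousLinearMap.comp_apply, map_sub]
        rw [hw1x x]
      rw [heq]
      exact hw3
  -- Adw ∘L W is a gDrazin inverse of A ∘L W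
  have hB' : IsGDrazinInv (A ∘L W) (Adw ∘L W) := by
    refine ⟨?_, ?_, ?_⟩
    · ext y
      simp only [ContinuousLinearMap.mul_apply, ContinuousLinearMap.comp_apply]
      exact hw1x (W y)
    · ext y
      simp only [ContinuousLinearMap.mul_apply, ContinuousLinearMap.comp_apply]
      exact hw2x (W y)
    · have heq : (A ∘L W) - (A ∘L W) * (A ∘L W) * (Adw ∘L W)
          = (A - A ∘L W ∘L Adw ∘L W ∘L A) ∘L W := by
        ext y
        simp only [ContinuousLinearMap.sub_apply, ContinuousLinearMap.mul_apply,
          ContinuousLinearMap.comp_apply, map_sub]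
        rw [hw1x (W y)]
      rw [heq]
      exact qn_swap _ W hw3
  have hDE : WAd = W ∘L Adw := gdrazin_unique hWAd hB
  have hD'E : AWd = Adw ∘L W := gdrazin_unique hAWd hB'
  -- intertwining relations
  have hWD' : ∀ y, W (AWd y) = WAd (W y) := by
    intro y; rw [hDE, hD'E]; simp only [ContinuousLinearMap.comp_apply]
  have hAD' : ∀ x, A (WAd x) = AWd (A x) := by
    intro x; rw [hDE, hD'E]
    simp only [ContinuousLinearMap.comp_apply]
    exact hw1x x
  -- pointwise facts from the g-Drazin equations
  have hcomm : ∀ x, W (A (WAd x)) = WAd (W (A x)) := fun x => by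
    simpa using DFunLike.congr_fun hWAd.1 x
  have hDTD : ∀ x, WAd (W (A (WAd x))) = WAd x := fun x => by
    simpa using DFunLike.congr_fun hWAd.2.1 x
  have hcomm' : ∀ y, A (W (AWd y)) = AWd (A (W y)) := fun y => by
    simpa using DFunLike.congr_fun hAWd.1 y
  have hD'UD' : ∀ y, AWd (A (W (AWd y))) = AWd y := fun y => by
    simpa using DFunLike.congr_fun hAWd.2.1 y
  -- projection facts
  have hqidem : ∀ x, PWA (PWA x) = PWA x := fun x => by
    simpa using DFunLike.congr_fun hPWA.1 x
  have hqD : ∀ x, PWA (WAd x) = WAd x := fun x =>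
    proj_fix hPWA _ (LinearMap.mem_range.mpr ⟨x, rfl⟩)
  have hqmem : ∀ x, ∃ z, WAd z = PWA x := by
    intro x
    have h := hPWA.2.2 ▸ LinearMap.mem_range_self (PWA : X →ₗ[ℂ] X) x
    obtain ⟨z, hz⟩ := LinearMap.mem_range.mp h
    exact ⟨z, hz⟩
  have hpD' : ∀ y, PAW (AWd y) = AWd y := fun y =>
    proj_fix hPAW _ (LinearMap.mem_range.mpr ⟨y, rfl⟩)
  have hpmem : ∀ y, ∃ z, AWd z = PAW y := by
    intro y
    have h := hPAW.2.2 ▸ LinearMap.mem_range_self (PAW : Y →ₗ[ℂ] Y) y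
    obtain ⟨z, hz⟩ := LinearMap.mem_range.mp h
    exact ⟨z, hz⟩
  -- key identities on X
  have hTDq : ∀ x, W (A (WAd (PWA x))) = PWA x := by
    intro x
    obtain ⟨z, hz⟩ := hqmem x
    rw [← hz, hcomm (WAd z), hDTD z]
  have hDTq : ∀ x, WAd (W (A (PWA x))) = PWA x := by
    intro x
    obtain ⟨z, hz⟩ := hqmem x
    rw [← hz, hDTD z]
  have hqTq : ∀ x, PWA (W (A (PWA x))) = W (A (PWA x)) := by
    intro x
    obtain ⟨z, hz⟩ := hqmem x
    rw [← hz, hcomm z, hqD (W (A z))]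
  -- key identities on Y
  have hUD'p : ∀ y, A (W (AWd (PAW y))) = PAW y := by
    intro y
    obtain ⟨z, hz⟩ := hpmem y
    rw [← hz, hcomm' (AWd z), hD'UD' z]
  have hD'Up : ∀ y, AWd (A (W (PAW y))) = PAW y := by
    intro y
    obtain ⟨z, hz⟩ := hpmem y
    rw [← hz, hD'UD' z]
  -- WAce is an orthogonal projection composition: (W∘A) * WAce = PWA
  have hTC : (W ∘L A) * WAce = PWA := proj_unique hWAce.1 hPWA
  have hTCx : ∀ x, W (A (WAce x)) = PWA x := fun x => by
    simpa using DFunLike.congr_fun hTC x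
  have hqC : ∀ x, PWA (WAce x) = WAce x := fun x =>
    proj_fix hPWA _ (hWAce.2 (LinearMap.mem_range.mpr ⟨x, rfl⟩))
  -- injectivity of W∘A on the range of WAd
  have hinj : ∀ z, z ∈ LinearMap.range WAd.toLinearMap → W (A z) = 0 → z = 0 := by
    intro z hz h0
    have hfix : PWA z = z := proj_fix hPWA z hz
    have hth := hDTq z
    rw [hfix, h0] at hth
    simpa using hth.symm
  -- WAce = WAd ∘L PWA
  have hCexp : WAce = WAd ∘L PWA := by
    ext x
    simp only [ContinuousLinearMap.comp_apply]
    have hdiff := hinj (WAce x - WAd (PWA x))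
      (Submodule.sub_mem _ (hWAce.2 (LinearMap.mem_range.mpr ⟨x, rfl⟩))
        (LinearMap.mem_range.mpr ⟨PWA x, rfl⟩))
      (by rw [map_sub, map_sub, hTCx x, hTDq x, sub_self])
    exact sub_eq_zero.mp hdiff
  -- injectivity of W∘A∘W on the range of AWd
  have hinj' : ∀ z, z ∈ LinearMap.range AWd.toLinearMap → W (A (W z)) = 0 → z = 0 := by
    intro z hz h0
    have hfix : PAW z = z := proj_fix hPAW z hz
    have h1 : AWd (A (W z)) = z := by
      have := hD'Up z; rwa [hfix] at this
    have h2 : A (W (A (W z))) = 0 := by rw [h0]; simp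
    calc z = AWd (A (W z)) := h1.symm
      _ = AWd (A (W (AWd (A (W z))))) := by rw [h1]; exact h1.symm
      _ = AWd (AWd (A (W (A (W z))))) := by rw [hcomm' (A (W z))]
      _ = 0 := by rw [h2]; simp
  -- Ace = AWd ∘L A ∘L WAd ∘L PWA
  have hWAWAce : W ∘L A ∘L W ∘L Ace = PWA := proj_unique hAce.1 hPWA
  have hWAWAcex : ∀ x, W (A (W (Ace x))) = PWA x := fun x => by
    simpa using DFunLike.congr_fun hWAWAce x
  have hAce_exp : Ace = AWd ∘L A ∘L WAd ∘L PWA := by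
    ext x
    simp only [ContinuousLinearMap.comp_apply]
    have hcand : W (A (W (AWd (A (WAd (PWA x)))))) = PWA x := by
      rw [hWD' (A (WAd (PWA x))), hTDq x, hTDq x]
    have hdiff := hinj' (Ace x - AWd (A (WAd (PWA x))))
      (Submodule.sub_mem _ (hAce.2 (LinearMap.mem_range.mpr ⟨x, rfl⟩))
        (LinearMap.mem_range.mpr ⟨A (WAd (PWA x)), rfl⟩))
      (by rw [map_sub, map_sub, map_sub, hWAWAcex x, hcand, sub_self])
    exact sub_eq_zero.mp hdiff
  -- more pointwise facts about WAce
  have hCq : ∀ x, WAce (PWA x) = WAce x := by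
    intro x; rw [hCexp]
    simp only [ContinuousLinearMap.comp_apply]
    rw [hqidem]
  have hCTq : ∀ x, WAce (W (A (PWA x))) = PWA x := by
    intro x; rw [hCexp]
    simp only [ContinuousLinearMap.comp_apply]
    rw [hqTq, hDTq]
  -- the candidates
  set S₀ : X →L[ℂ] Y := AWd ∘L A ∘L PWA with hS₀
  set G₀ : X →L[ℂ] X := WAce ∘L WAce ∘L (W ∘L A) with hG₀
  have hWpmem : ∀ y, W (PAW y) ∈ LinearMap.range WAd.toLinearMap := by
    intro y
    obtain ⟨z, hz⟩ := hpmem y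
    rw [← hz, hWD' z]
    exact LinearMap.mem_range_self _ _
  have hqWp : ∀ y, PWA (W (PAW y)) = W (PAW y) := fun y =>
    proj_fix hPWA _ (hWpmem y)
  -- S₀ is the MP inverse of W ∘L PAW
  have hMPS : IsMPInv (W ∘L PAW) S₀ := by
    refine ⟨?_, ?_, ?_, ?_⟩
    · ext y
      simp only [hS₀, ContinuousLinearMap.comp_apply]
      rw [hqWp y, hpD', ]
      exact congrArg W (hD'Up y)
    · ext x
      simp only [hS₀, ContinuousLinearMap.comp_apply]
      rw [hpD', hWD', hqD, hDTq]
    · have hVS : (W ∘L PAW) ∘L S₀ = PWA := by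
        ext x
        simp only [hS₀, ContinuousLinearMap.comp_apply]
        rw [hpD', hWD', hDTq]
      rw [hVS]
      exact hPWA.2.1
    · have hSV : S₀ ∘L (W ∘L PAW) = PAW := by
        ext y
        simp only [hS₀, ContinuousLinearMap.comp_apply]
        rw [hqWp y]
        exact hD'Up y
      rw [hSV]
      exact hPAW.2.1
  -- group inverse computations
  have l1 : ∀ x, PWA (W (A (WAce (WAce (W (A x)))))) = WAce (W (A x)) := by
    intro x; rw [hTCx, hqidem, hqC]
  have l2 : ∀ x, WAce (WAce (W (A (PWA (W (A x)))))) = WAce (W (A x)) := by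
    intro x; rw [hCTq, hCq]
  have hG : IsGroupInv (PWA * (W ∘L A)) G₀ := by
    refine ⟨?_, ?_, ?_⟩
    · ext x
      simp only [hG₀, ContinuousLinearMap.mul_apply, ContinuousLinearMap.comp_apply]
      exact (l1 x).trans (l2 x).symm
    · ext x
      simp only [hG₀, ContinuousLinearMap.mul_apply, ContinuousLinearMap.comp_apply]
      rw [l1 x, hTCx (W (A x)), hCq]
    · ext x
      simp only [hG₀, ContinuousLinearMap.mul_apply, ContinuousLinearMap.comp_apply]
      rw [l2 x, hTCx (W (A x)), hqidem]
  have hM : (W ∘L A) * WAce * (W ∘L A) = PWA * (W ∘L A) := by rw [hTC]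
  have hGM : IsGroupInv ((W ∘L A) * WAce * (W ∘L A)) G₀ := by rw [hM]; exact hG
  -- the final formula
  have hfinal : Aot = S₀ ∘L G₀ := by
    rw [hAot, hAce_exp, hS₀, hG₀, hCexp]
    ext x
    simp only [ContinuousLinearMap.comp_apply]
    rw [hWD' (A (WAd (PWA (W (A x)))))]
    simp only [hTDq, hqD]
  refine ⟨⟨S₀, hMPS⟩, ⟨G₀, hGM⟩, ⟨G₀, hG⟩, ?_⟩
  intro S G G' hS hG1 hG2
  have hSS : S = S₀ := mp_unique hS hMPS
  have hGG : G = G₀ := group_unique hG1 hGM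
  have hGG' : G' = G₀ := group_unique hG2 hG
  exact ⟨by rw [hSS, hGG, hfinal], by rw [hSS, hGG', hfinal]⟩
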